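/- One-sided concentration for an anomalous sequence (lower tail): Let p, q be probability measures on a measurable space 𝒳 and k a measurable kernel with 0 ≤ k(x,y) ≤ K. Let m ≥ 2, let X be an i.i.d. m-sample from p and Y an i.i.d. m-sample from q, independent of X, and let 0 < δ < MMD²[p,q]. Then P( MMD_u²[X,Y] ≤ δ ) ≤ exp( − m (MMD²[p,q] − δ)² / (16K²) ). -/

import Mathlib

open MeasureTheory ProbabilityTheory Filter

noncomputable def mmdSq {𝓧 : Type*} [MeasurableSpace 𝓧]
    (κ : 𝓧 → 𝓧 → ℝ) (p q : Measure 𝓧) : ℝ :=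
  (∫ x, ∫ x', κ x x' ∂p ∂p) - 2 * (∫ x, ∫ y, κ x y ∂q ∂p)
    + (∫ y, ∫ y', κ y y' ∂q ∂q)

noncomputable def mmdU {𝓧 : Type*} (κ : 𝓧 → 𝓧 → ℝ)
    {ι₁ ι₂ : Type*} [Fintype ι₁] [Fintype ι₂] [DecidableEq ι₁] [DecidableEq ι₂]
    (X : ι₁ → 𝓧) (Y : ι₂ → 𝓧) : ℝ :=
  (1 / ((Fintype.card ι₁ : ℝ) * ((Fintype.card ι₁ : ℝ) - 1))) *
      ∑ i : ι₁, ∑ j ∈ Finset.univ.erase i, κ (X i) (X j)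
    + (1 / ((Fintype.card ι₂ : ℝ) * ((Fintype.card ι₂ : ℝ) - 1))) *
      ∑ i : ι₂, ∑ j ∈ Finset.univ.erase i, κ (Y i) (Y j)
    - (2 / ((Fintype.card ι₁ : ℝ) * (Fintype.card ι₂ : ℝ))) *
      ∑ i : ι₁, ∑ j : ι₂, κ (X i) (Y j)

/-!
`mmdU κ X Y` is an unbiased estimator of `mmdSq κ p q` with values in `[-2K, 2K]`, and replacing a
single one of the `2m` sample points moves it by at most `4K / m`. McDiarmid's argument (reveal the
coordinates one at a time; by Hoeffding's lemma each conditional increment, which ranges over an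
interval of length `4K / m`, is sub-Gaussian with parameter `(2K / m)²`) shows that it is
sub-Gaussian with parameter `2m · (2K / m)² = 8K² / m`, and the Chernoff bound for the lower tail
at distance `ε = mmdSq κ p q - δ` is `exp (-ε² / (2 · 8K² / m)) = exp (-m ε² / (16 K²))`.
-/

open Real Finset
open scoped NNReal

lemma exists_forall_mem_Icc_of_sub_le {α : Type*} [Nonempty α] {g : α → ℝ} {c : ℝ}
    (h : ∀ x x', g x - g x' ≤ c) : ∃ a, ∀ x, g x ∈ Set.Icc a (a + c) := by
  obtain ⟨x₀⟩ := ‹Nonempty α›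
  have hbdd : BddBelow (Set.range g) := ⟨g x₀ - c, by rintro _ ⟨x, rfl⟩; linarith [h x₀ x]⟩
  refine ⟨sInf (Set.range g), fun x => ⟨csInf_le hbdd ⟨x, rfl⟩, ?_⟩⟩
  have : g x - c ≤ sInf (Set.range g) :=
    le_csInf (Set.range_nonempty g) (by rintro _ ⟨x', rfl⟩; linarith [h x x'])
  linarith

lemma Finset.sum_sub_sum_le_card_mul {α : Type*} {s t : Finset α} (hts : t ⊆ s) {f g : α → ℝ}
    {K : ℝ} (hfg : ∀ x ∈ s, x ∉ t → f x = g x) (hf : ∀ x ∈ t, f x ≤ K)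
    (hg : ∀ x ∈ t, 0 ≤ g x) :
    ∑ x ∈ s, f x - ∑ x ∈ s, g x ≤ #t * K := by
  classical
  rw [← sum_sdiff hts, ← sum_sdiff hts (f := g),
    sum_congr rfl fun x hx => hfg x (mem_sdiff.1 hx).1 (mem_sdiff.1 hx).2]
  have hf' := sum_le_card_nsmul t f K hf
  have hg' := sum_nonneg hg
  rw [nsmul_eq_mul] at hf'
  linarith

lemma Finset.inv_card_mul_sum_mem_Icc {α : Type*} {s : Finset α} (hs : s.Nonempty) {f : α → ℝ}
    {a b : ℝ} (hf : ∀ x ∈ s, f x ∈ Set.Icc a b) : (#s : ℝ)⁻¹ * ∑ x ∈ s, f x ∈ Set.Icc a b := by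
  have hcard : (0 : ℝ) < #s := by exact_mod_cast hs.card_pos
  have ha := card_nsmul_le_sum s f a fun x hx => (hf x hx).1
  have hb := sum_le_card_nsmul s f b fun x hx => (hf x hx).2
  rw [nsmul_eq_mul] at ha hb
  exact ⟨(le_inv_mul_iff₀ hcard).2 ha, (inv_mul_le_iff₀ hcard).2 hb⟩

lemma card_univ_offDiag {ι : Type*} [Fintype ι] [DecidableEq ι] :
    (#(univ : Finset ι).offDiag : ℝ) = Fintype.card ι * (Fintype.card ι - 1) := by
  rw [offDiag_card, Nat.cast_sub (Nat.le_mul_self _), card_univ]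
  push_cast
  ring

lemma card_univ_offDiag_pos {ι : Type*} [Fintype ι] [DecidableEq ι] (hn : 2 ≤ Fintype.card ι) :
    (0 : ℝ) < #(univ : Finset ι).offDiag := by
  have : (2 : ℝ) ≤ Fintype.card ι := by exact_mod_cast hn
  rw [card_univ_offDiag]
  nlinarith

lemma sum_univ_offDiag {ι M : Type*} [Fintype ι] [DecidableEq ι] [AddCommMonoid M]
    (f : ι → ι → M) :
    ∑ p ∈ univ.offDiag, f p.1 p.2 = ∑ i, ∑ j ∈ univ.erase i, f i j :=
  sum_finset_product' _ _ _ fun p => by simp [ne_comm]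

lemma Measurable.uncurry_comp₂ {α β γ δ : Type*} [MeasurableSpace α] [MeasurableSpace β]
    [MeasurableSpace γ] [MeasurableSpace δ] {φ : α → β → γ} (hφ : Measurable (Function.uncurry φ))
    {f : δ → α} {g : δ → β} (hf : Measurable f) (hg : Measurable g) :
    Measurable fun x => φ (f x) (g x) :=
  hφ.comp (hf.prodMk hg)

lemma measurePreserving_eval_prod_eval {ι : Type*} [Fintype ι] {α : ι → Type*}
    [∀ i, MeasurableSpace (α i)] (μ : ∀ i, Measure (α i)) [∀ i, IsProbabilityMeasure (μ i)]
    {i j : ι} (hij : i ≠ j) :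
    MeasurePreserving (fun x => (x i, x j)) (Measure.pi μ) ((μ i).prod (μ j)) := by
  have hind : IndepFun (fun x : ∀ i, α i => x i) (fun x => x j) (Measure.pi μ) :=
    (iIndepFun_pi (X := fun _ => id) fun _ => aemeasurable_id).indepFun hij
  refine ⟨by fun_prop, ?_⟩
  rw [hind.map_prod_eq_prod_map_map (measurable_pi_apply i).aemeasurable
    (measurable_pi_apply j).aemeasurable, (measurePreserving_eval μ i).map_eq,
    (measurePreserving_eval μ j).map_eq]

lemma MeasureTheory.MeasurePreserving.integral_comp_eq_integral_integral {Ω E F : Type*}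
    [MeasurableSpace Ω] [MeasurableSpace E] [MeasurableSpace F] {ρ : Measure Ω} {μ : Measure E}
    {ν : Measure F} [SFinite μ] [SFinite ν] {φ : Ω → E × F} (hφ : MeasurePreserving φ ρ (μ.prod ν))
    {f : E → F → ℝ} (hf : Integrable (Function.uncurry f) (μ.prod ν)) :
    ∫ ω, f (φ ω).1 (φ ω).2 ∂ρ = ∫ x, ∫ y, f x y ∂ν ∂μ := by
  rw [integral_integral hf, ← hφ.map_eq,
    integral_map hφ.measurable.aemeasurable (hφ.map_eq ▸ hf.aestronglyMeasurable)]

namespace ProbabilityTheory.HasSubgaussianMGF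

variable {Ω Ω' : Type*} [MeasurableSpace Ω] [MeasurableSpace Ω'] {μ : Measure Ω} {c : ℝ≥0}

lemma sub_integral_comp_measurePreserving {μ' : Measure Ω'} {T : Ω' → Ω}
    {f : Ω → ℝ} (h : HasSubgaussianMGF (fun x => f x - ∫ y, f y ∂μ) c μ)
    (hT : MeasurePreserving T μ' μ) (hTe : MeasurableEmbedding T) :
    HasSubgaussianMGF (fun x => f (T x) - ∫ y, f (T y) ∂μ') c μ' := by
  have h' : HasSubgaussianMGF (fun x => f x - ∫ y, f y ∂μ) c (μ'.map T) := by rwa [hT.map_eq]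
  rw [hT.integral_comp hTe]
  exact h'.of_map hT.measurable.aemeasurable

lemma measure_le_integral_sub_le [IsFiniteMeasure μ] {f : Ω → ℝ}
    (h : HasSubgaussianMGF (fun x => f x - ∫ y, f y ∂μ) c μ) {ε : ℝ} (hε : 0 ≤ ε) :
    μ {x | f x ≤ ∫ y, f y ∂μ - ε} ≤ ENNReal.ofReal (exp (-ε ^ 2 / (2 * c))) := by
  have hset : {x | f x ≤ ∫ y, f y ∂μ - ε} = {x | ε ≤ -(f x - ∫ y, f y ∂μ)} := by
    ext x
    simp only [Set.mem_ofPred_eq]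
    constructor <;> intro <;> linarith
  rw [← ofReal_measureReal, hset]
  exact ENNReal.ofReal_le_ofReal (h.neg.measure_ge_le hε)

lemma prod_of_sections {E F : Type*} [MeasurableSpace E] [MeasurableSpace F] {μ : Measure E}
    {ν : Measure F} [IsProbabilityMeasure μ] [IsProbabilityMeasure ν] {f : E × F → ℝ} (hf : Measurable f) {a b : ℝ}
    (hab : ∀ z, f z ∈ Set.Icc a b) {c₁ c₂ : ℝ≥0}
    (h₁ : HasSubgaussianMGF (fun x => ∫ y, f (x, y) ∂ν - ∫ z, f z ∂μ.prod ν) c₁ μ)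
    (h₂ : ∀ x, HasSubgaussianMGF (fun y => f (x, y) - ∫ y', f (x, y') ∂ν) c₂ ν) :
    HasSubgaussianMGF (fun z => f z - ∫ z', f z' ∂μ.prod ν) (c₁ + c₂) (μ.prod ν) := by
  set M := ∫ z', f z' ∂μ.prod ν
  set g := fun x => ∫ y, f (x, y) ∂ν
  have hint : ∀ t, Integrable (fun z => exp (t * (f z - M))) (μ.prod ν) := fun t =>
    integrable_exp_mul_of_mem_Icc (hf.sub_const M).aemeasurable
      (ae_of_all _ fun z => ⟨sub_le_sub_right (hab z).1 M, sub_le_sub_right (hab z).2 M⟩)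
  refine ⟨hint, fun t => ?_⟩
  have hsplit : ∀ x y, exp (t * (f (x, y) - M))
      = exp (t * (g x - M)) * exp (t * (f (x, y) - g x)) := by
    intro x y
    rw [← exp_add]
    ring_nf
  calc mgf (fun z => f z - M) (μ.prod ν) t
      = ∫ x, exp (t * (g x - M)) * mgf (fun y => f (x, y) - g x) ν t ∂μ := by
        simp_rw [mgf, integral_prod _ (hint t), hsplit, integral_const_mul]
    _ ≤ ∫ x, exp (t * (g x - M)) * exp (c₂ * t ^ 2 / 2) ∂μ :=
        integral_mono_of_nonneg (ae_of_all _ fun x => mul_nonneg (exp_pos _).le mgf_nonneg)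
          ((h₁.integrable_exp_mul t).mul_const _)
          (ae_of_all _ fun x => mul_le_mul_of_nonneg_left ((h₂ x).mgf_le t) (exp_pos _).le)
    _ = mgf (fun x => g x - M) μ t * exp (c₂ * t ^ 2 / 2) := integral_mul_const _ _
    _ ≤ exp (c₁ * t ^ 2 / 2) * exp (c₂ * t ^ 2 / 2) := by gcongr; exact h₁.mgf_le t
    _ = exp (↑(c₁ + c₂) * t ^ 2 / 2) := by rw [← exp_add]; push_cast; ring_nf

end ProbabilityTheory.HasSubgaussianMGF

section McDiarmid

universe u

def HasBoundedDifferences {ι : Type*} {α : ι → Type*} (f : (∀ i, α i) → ℝ) (c : ι → ℝ≥0) :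
    Prop :=
  ∀ i x x', (∀ j, j ≠ i → x j = x' j) → f x - f x' ≤ c i

namespace HasBoundedDifferences

variable {n : ℕ} {α : Fin (n + 1) → Type*} {f : (∀ i, α i) → ℝ} {c : Fin (n + 1) → ℝ≥0}

lemma insertNth (hf : HasBoundedDifferences f c) (i : Fin (n + 1)) (x : α i) :
    HasBoundedDifferences (fun y => f (i.insertNth x y)) (fun j => c (i.succAbove j)) := by
  intro j y y' hyy'
  refine hf (i.succAbove j) _ _ fun k hk => ?_
  induction k using i.succAboveCases with
  | x => simp
  | p l => simpa using hyy' l (by rintro rfl; exact hk rfl)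

lemma insertNth_sub_insertNth_le (hf : HasBoundedDifferences f c) (i : Fin (n + 1))
    (x x' : α i) (y : ∀ j, α (i.succAbove j)) :
    f (i.insertNth x y) - f (i.insertNth x' y) ≤ c i := by
  refine hf i _ _ fun k hk => ?_
  induction k using i.succAboveCases with
  | x => exact absurd rfl hk
  | p l => simp

end HasBoundedDifferences

open HasSubgaussianMGF in
theorem hasSubgaussianMGF_pi_fin_of_hasBoundedDifferences {n : ℕ} {α : Fin n → Type u}
    [∀ i, MeasurableSpace (α i)] (μ : ∀ i, Measure (α i)) [∀ i, IsProbabilityMeasure (μ i)]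
    {f : (∀ i, α i) → ℝ} (hf : Measurable f) {a b : ℝ} (hab : ∀ x, f x ∈ Set.Icc a b)
    {c : Fin n → ℝ≥0} (hc : HasBoundedDifferences f c) :
    HasSubgaussianMGF (fun x => f x - ∫ y, f y ∂Measure.pi μ) (∑ i, (c i / 2) ^ 2)
      (Measure.pi μ) := by
  induction n with
  | zero =>
    have hconst : ∀ x, f x - ∫ y, f y ∂Measure.pi μ = 0 := fun x => by
      rw [show f = fun _ => f x from funext fun y => congrArg f (Subsingleton.elim y x)]
      simp
    simp only [hconst, univ_eq_empty, sum_empty]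
    exact fun_zero
  | succ n ih =>
    let T := MeasurableEquiv.piFinSuccAbove α 0
    let ν := fun j => μ ((0 : Fin (n + 1)).succAbove j)
    let G : α 0 × (∀ j, α ((0 : Fin (n + 1)).succAbove j)) → ℝ := fun z => f (T.symm z)
    have hG : Measurable G := hf.comp T.symm.measurable
    have hfiber (x : α 0) := ih ν (hG.comp measurable_prodMk_left) (fun y => hab _)
      (hc.insertNth 0 x)
    have hint (x : α 0) : Integrable (fun y => G (x, y)) (Measure.pi ν) :=
      Integrable.of_mem_Icc a b (hG.comp measurable_prodMk_left).aemeasurable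
        (ae_of_all _ fun y => hab _)
    let g x := ∫ y, G (x, y) ∂Measure.pi ν
    have hosc : ∀ x x', g x - g x' ≤ c 0 := fun x x' => by
      rw [← integral_sub (hint x) (hint x')]
      refine (integral_mono ((hint x).sub (hint x')) (integrable_const _)
        fun y => hc.insertNth_sub_insertNth_le 0 x x' y).trans_eq ?_
      rw [integral_const, probReal_univ, one_smul]
    have : Nonempty (α 0) := nonempty_of_isProbabilityMeasure (μ 0)
    -- an interval of length `c 0`, not `2 * c 0`: this is what gives the constant `(c 0 / 2) ^ 2`
    obtain ⟨a', ha'⟩ := exists_forall_mem_Icc_of_sub_le hosc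
    have hcond := hasSubgaussianMGF_of_mem_Icc
      (hG.stronglyMeasurable.integral_prod_right'.measurable.aemeasurable (μ := μ 0))
      (ae_of_all _ ha')
    rw [← integral_prod _ (Integrable.of_mem_Icc a b hG.aemeasurable (ae_of_all _ fun z => hab _)),
      add_sub_cancel_left] at hcond
    have := (prod_of_sections hG (fun z => hab _) (by simpa using hcond) hfiber)
      |>.sub_integral_comp_measurePreserving (measurePreserving_piFinSuccAbove μ 0)
        T.measurableEmbedding
    rw [Fin.sum_univ_succAbove _ 0]
    simpa only [G, T, MeasurableEquiv.symm_apply_apply] using this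

theorem hasSubgaussianMGF_pi_of_hasBoundedDifferences {ι : Type*} [Fintype ι] {α : ι → Type u}
    [∀ i, MeasurableSpace (α i)] (μ : ∀ i, Measure (α i)) [∀ i, IsProbabilityMeasure (μ i)]
    {f : (∀ i, α i) → ℝ} (hf : Measurable f) {a b : ℝ} (hab : ∀ x, f x ∈ Set.Icc a b)
    {c : ι → ℝ≥0} (hc : HasBoundedDifferences f c) :
    HasSubgaussianMGF (fun x => f x - ∫ y, f y ∂Measure.pi μ) (∑ i, (c i / 2) ^ 2)
      (Measure.pi μ) := by
  let e := (Fintype.equivFin ι).symm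
  let T := MeasurableEquiv.piCongrLeft α e
  have hT : MeasurePreserving T (Measure.pi fun k => μ (e k)) (Measure.pi μ) :=
    measurePreserving_piCongrLeft μ e
  have hcT : HasBoundedDifferences (fun x => f (T x)) (fun k => c (e k)) := by
    intro k x x' hxx'
    refine hc (e k) _ _ fun i hi => ?_
    obtain ⟨l, rfl⟩ := e.surjective i
    simpa only [T, MeasurableEquiv.piCongrLeft_apply_apply] using
      hxx' l (by rintro rfl; exact hi rfl)
  have := (hasSubgaussianMGF_pi_fin_of_hasBoundedDifferences (fun k => μ (e k))
    (hf.comp T.measurable) (fun x => hab _) hcT).sub_integral_comp_measurePreserving (hT.symm T)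
    T.symm.measurableEmbedding
  rw [← e.sum_comp]
  simpa only [Function.comp_apply, MeasurableEquiv.apply_symm_apply] using this

end McDiarmid

section MMD

variable {𝓧 : Type*}

noncomputable def offDiagMean (κ : 𝓧 → 𝓧 → ℝ) {ι : Type*} [Fintype ι] [DecidableEq ι]
    (X : ι → 𝓧) : ℝ :=
  (#(univ : Finset ι).offDiag : ℝ)⁻¹ * ∑ p ∈ univ.offDiag, κ (X p.1) (X p.2)

noncomputable def crossMean (κ : 𝓧 → 𝓧 → ℝ) {ι₁ ι₂ : Type*} [Fintype ι₁] [Fintype ι₂]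
    (X : ι₁ → 𝓧) (Y : ι₂ → 𝓧) : ℝ :=
  (Fintype.card (ι₁ × ι₂) : ℝ)⁻¹ * ∑ p : ι₁ × ι₂, κ (X p.1) (Y p.2)

variable {κ : 𝓧 → 𝓧 → ℝ} {K : ℝ} {ι ι₁ ι₂ : Type*} [Fintype ι] [DecidableEq ι] [Fintype ι₁]
  [Fintype ι₂]

lemma offDiagMean_mem_Icc (hκ : ∀ x y, κ x y ∈ Set.Icc 0 K) (hn : 2 ≤ Fintype.card ι)
    (X : ι → 𝓧) : offDiagMean κ X ∈ Set.Icc 0 K :=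
  inv_card_mul_sum_mem_Icc (card_pos.1 (by exact_mod_cast card_univ_offDiag_pos hn))
    fun p _ => hκ _ _

lemma crossMean_mem_Icc [Nonempty ι₁] [Nonempty ι₂] (hκ : ∀ x y, κ x y ∈ Set.Icc 0 K)
    (X : ι₁ → 𝓧) (Y : ι₂ → 𝓧) : crossMean κ X Y ∈ Set.Icc 0 K := by
  rw [crossMean, ← card_univ]
  exact inv_card_mul_sum_mem_Icc univ_nonempty fun p _ => hκ _ _

lemma offDiagMean_sub_offDiagMean_le (hκ : ∀ x y, κ x y ∈ Set.Icc 0 K)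
    (hn : 2 ≤ Fintype.card ι) {X X' : ι → 𝓧} (i : ι) (hX : ∀ j, j ≠ i → X j = X' j) :
    offDiagMean κ X - offDiagMean κ X' ≤ 2 * K / Fintype.card ι := by
  have hK : 0 ≤ K := (hκ (X i) (X i)).1.trans (hκ _ _).2
  have hn' : (2 : ℝ) ≤ Fintype.card ι := by exact_mod_cast hn
  let t := ({i} ×ˢ univ.erase i) ∪ (univ.erase i ×ˢ {i})
  have hts : t ⊆ univ.offDiag := by
    intro p
    simp only [t, mem_union, mem_product, mem_singleton, mem_erase, mem_offDiag]
    aesop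
  have hcard : (#t : ℝ) ≤ 2 * (Fintype.card ι - 1) := by
    have : #t ≤ 2 * (Fintype.card ι - 1) := (card_union_le _ _).trans (by simp [two_mul])
    rw [show (Fintype.card ι : ℝ) - 1 = (Fintype.card ι - 1 : ℕ) by
      push_cast [Nat.cast_sub (by omega : 1 ≤ Fintype.card ι)]; ring]
    exact_mod_cast this
  have hsum := sum_sub_sum_le_card_mul hts (f := fun p => κ (X p.1) (X p.2))
    (g := fun p => κ (X' p.1) (X' p.2))
    (fun p hp hpt => by
      simp only [t, mem_union, mem_product, mem_singleton, mem_erase, mem_offDiag,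
        mem_univ] at hp hpt
      rw [hX p.1 (by grind), hX p.2 (by grind)])
    (fun p _ => (hκ _ _).2) (fun p _ => (hκ _ _).1)
  rw [offDiagMean, offDiagMean, ← mul_sub, card_univ_offDiag]
  calc _ ≤ ((Fintype.card ι : ℝ) * (Fintype.card ι - 1))⁻¹ * (2 * (Fintype.card ι - 1) * K) :=
        mul_le_mul_of_nonneg_left (hsum.trans (mul_le_mul_of_nonneg_right hcard hK))
          (inv_nonneg.2 (by nlinarith))
    _ = 2 * K / Fintype.card ι := by
        have : (Fintype.card ι : ℝ) - 1 ≠ 0 := by linarith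
        field_simp

lemma crossMean_sub_crossMean_le_left [Nonempty ι₂] (hκ : ∀ x y, κ x y ∈ Set.Icc 0 K)
    {X X' : ι₁ → 𝓧} (Y : ι₂ → 𝓧) (i : ι₁) (hX : ∀ j, j ≠ i → X j = X' j) :
    crossMean κ X Y - crossMean κ X' Y ≤ K / Fintype.card ι₁ := by
  have hsum := sum_sub_sum_le_card_mul (subset_univ ({i} ×ˢ univ))
    (f := fun p => κ (X p.1) (Y p.2)) (g := fun p => κ (X' p.1) (Y p.2))
    (fun p _ hp => by
      rw [hX p.1 (by simpa only [mem_product, mem_singleton, mem_univ, and_true] using hp)])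
    (fun p _ => (hκ _ _).2) (fun p _ => (hκ _ _).1)
  rw [card_product, card_singleton, card_univ, one_mul] at hsum
  rw [crossMean, crossMean, ← mul_sub, Fintype.card_prod, Nat.cast_mul]
  calc _ ≤ ((Fintype.card ι₁ : ℝ) * Fintype.card ι₂)⁻¹ * (Fintype.card ι₂ * K) :=
        mul_le_mul_of_nonneg_left hsum (by positivity)
    _ = K / Fintype.card ι₁ := by field_simp

lemma crossMean_sub_crossMean_le_right [Nonempty ι₁] (hκ : ∀ x y, κ x y ∈ Set.Icc 0 K)
    (X : ι₁ → 𝓧) {Y Y' : ι₂ → 𝓧} (i : ι₂) (hY : ∀ j, j ≠ i → Y j = Y' j) :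
    crossMean κ X Y - crossMean κ X Y' ≤ K / Fintype.card ι₂ := by
  have hsum := sum_sub_sum_le_card_mul (subset_univ (univ ×ˢ {i}))
    (f := fun p => κ (X p.1) (Y p.2)) (g := fun p => κ (X p.1) (Y' p.2))
    (fun p _ hp => by
      rw [hY p.2 (by simpa only [mem_product, mem_singleton, mem_univ, true_and] using hp)])
    (fun p _ => (hκ _ _).2) (fun p _ => (hκ _ _).1)
  rw [card_product, card_singleton, card_univ, mul_one] at hsum
  rw [crossMean, crossMean, ← mul_sub, Fintype.card_prod, Nat.cast_mul]
  calc _ ≤ ((Fintype.card ι₁ : ℝ) * Fintype.card ι₂)⁻¹ * (Fintype.card ι₁ * K) :=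
        mul_le_mul_of_nonneg_left hsum (by positivity)
    _ = K / Fintype.card ι₂ := by field_simp

section Integral

variable [MeasurableSpace 𝓧]

lemma measurable_offDiagMean (hκ : Measurable (Function.uncurry κ)) :
    Measurable fun X : ι → 𝓧 => offDiagMean κ X := by
  unfold offDiagMean
  exact (Finset.measurable_sum _ fun p _ =>
    hκ.uncurry_comp₂ (by fun_prop) (by fun_prop)).const_mul _

lemma measurable_crossMean (hκ : Measurable (Function.uncurry κ)) :
    Measurable fun Z : (ι₁ → 𝓧) × (ι₂ → 𝓧) => crossMean κ Z.1 Z.2 := by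
  unfold crossMean
  exact (Finset.measurable_sum _ fun p _ =>
    hκ.uncurry_comp₂ (by fun_prop) (by fun_prop)).const_mul _

lemma integral_offDiagMean (hκm : Measurable (Function.uncurry κ))
    (hκ : ∀ x y, κ x y ∈ Set.Icc 0 K) (μ : Measure 𝓧) [IsProbabilityMeasure μ]
    (hn : 2 ≤ Fintype.card ι) :
    ∫ X, offDiagMean κ X ∂Measure.pi (fun _ : ι => μ) = ∫ x, ∫ y, κ x y ∂μ ∂μ := by
  have hint : Integrable (Function.uncurry κ) (μ.prod μ) :=
    Integrable.of_mem_Icc 0 K hκm.aemeasurable (ae_of_all _ fun z => hκ _ _)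
  unfold offDiagMean
  rw [integral_const_mul, integral_finsetSum _ fun p _ => Integrable.of_mem_Icc 0 K
      (hκm.uncurry_comp₂ (measurable_pi_apply _) (measurable_pi_apply _)).aemeasurable
      (ae_of_all _ fun X => hκ _ _),
    sum_congr rfl fun p hp => (measurePreserving_eval_prod_eval (fun _ => μ)
      (mem_offDiag.1 hp).2.2).integral_comp_eq_integral_integral hint,
    sum_const, nsmul_eq_mul, ← mul_assoc, inv_mul_cancel₀ (card_univ_offDiag_pos hn).ne', one_mul]

lemma integral_crossMean (hκm : Measurable (Function.uncurry κ))
    (hκ : ∀ x y, κ x y ∈ Set.Icc 0 K) (p q : Measure 𝓧) [IsProbabilityMeasure p]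
    [IsProbabilityMeasure q] [Nonempty ι₁] [Nonempty ι₂] :
    ∫ Z, crossMean κ Z.1 Z.2 ∂(Measure.pi fun _ : ι₁ => p).prod (Measure.pi fun _ : ι₂ => q)
      = ∫ x, ∫ y, κ x y ∂q ∂p := by
  have hint : Integrable (Function.uncurry κ) (p.prod q) :=
    Integrable.of_mem_Icc 0 K hκm.aemeasurable (ae_of_all _ fun z => hκ _ _)
  unfold crossMean
  rw [integral_const_mul, integral_finsetSum _ fun ij _ => Integrable.of_mem_Icc 0 K
      (hκm.uncurry_comp₂ (by fun_prop) (by fun_prop)).aemeasurable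
      (ae_of_all _ fun Z => hκ _ _),
    sum_congr rfl fun ij _ => ((measurePreserving_eval _ ij.1).prod
      (measurePreserving_eval _ ij.2)).integral_comp_eq_integral_integral hint,
    sum_const, nsmul_eq_mul, card_univ, ← mul_assoc, inv_mul_cancel₀ (by positivity), one_mul]

end Integral

variable [DecidableEq ι₁] [DecidableEq ι₂]

lemma mmdU_eq (X : ι₁ → 𝓧) (Y : ι₂ → 𝓧) :
    mmdU κ X Y = offDiagMean κ X + offDiagMean κ Y - 2 * crossMean κ X Y := by
  rw [mmdU, offDiagMean, offDiagMean, crossMean, sum_univ_offDiag fun i j => κ (X i) (X j),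
    sum_univ_offDiag fun i j => κ (Y i) (Y j), card_univ_offDiag, card_univ_offDiag,
    Fintype.card_prod, Fintype.sum_prod_type]
  push_cast
  ring

lemma mmdU_mem_Icc (hκ : ∀ x y, κ x y ∈ Set.Icc 0 K)
    (h₁ : 2 ≤ Fintype.card ι₁) (h₂ : 2 ≤ Fintype.card ι₂) (X : ι₁ → 𝓧) (Y : ι₂ → 𝓧) :
    mmdU κ X Y ∈ Set.Icc (-2 * K) (2 * K) := by
  have : Nonempty ι₁ := Fintype.card_pos_iff.1 (by omega)
  have : Nonempty ι₂ := Fintype.card_pos_iff.1 (by omega)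
  have hX := offDiagMean_mem_Icc hκ h₁ X
  have hY := offDiagMean_mem_Icc hκ h₂ Y
  have hXY := crossMean_mem_Icc hκ X Y
  rw [mmdU_eq]
  constructor <;> linarith [hX.1, hX.2, hY.1, hY.2, hXY.1, hXY.2]

lemma mmdU_sub_mmdU_le_left [Nonempty ι₂] (hκ : ∀ x y, κ x y ∈ Set.Icc 0 K)
    (hn : 2 ≤ Fintype.card ι₁) {X X' : ι₁ → 𝓧} (Y : ι₂ → 𝓧) (i : ι₁)
    (hX : ∀ j, j ≠ i → X j = X' j) :
    mmdU κ X Y - mmdU κ X' Y ≤ 4 * K / Fintype.card ι₁ := by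
  have hoff := offDiagMean_sub_offDiagMean_le hκ hn i hX
  have hcross := crossMean_sub_crossMean_le_left hκ Y i fun j hj => (hX j hj).symm
  rw [mmdU_eq, mmdU_eq, show 4 * K / Fintype.card ι₁
    = 2 * K / Fintype.card ι₁ + 2 * (K / Fintype.card ι₁) by ring]
  linarith

lemma mmdU_sub_mmdU_le_right [Nonempty ι₁] (hκ : ∀ x y, κ x y ∈ Set.Icc 0 K)
    (hn : 2 ≤ Fintype.card ι₂) (X : ι₁ → 𝓧) {Y Y' : ι₂ → 𝓧} (i : ι₂)
    (hY : ∀ j, j ≠ i → Y j = Y' j) :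
    mmdU κ X Y - mmdU κ X Y' ≤ 4 * K / Fintype.card ι₂ := by
  have hoff := offDiagMean_sub_offDiagMean_le hκ hn i hY
  have hcross := crossMean_sub_crossMean_le_right hκ X i fun j hj => (hY j hj).symm
  rw [mmdU_eq, mmdU_eq, show 4 * K / Fintype.card ι₂
    = 2 * K / Fintype.card ι₂ + 2 * (K / Fintype.card ι₂) by ring]
  linarith

variable [MeasurableSpace 𝓧]

lemma measurable_mmdU (hκ : Measurable (Function.uncurry κ)) :
    Measurable fun Z : (ι₁ → 𝓧) × (ι₂ → 𝓧) => mmdU κ Z.1 Z.2 := by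
  simp_rw [mmdU_eq]
  exact (((measurable_offDiagMean hκ).comp measurable_fst).add
    ((measurable_offDiagMean hκ).comp measurable_snd)).sub ((measurable_crossMean hκ).const_mul 2)

theorem integral_mmdU (hκm : Measurable (Function.uncurry κ)) (hκ : ∀ x y, κ x y ∈ Set.Icc 0 K)
    (p q : Measure 𝓧) [IsProbabilityMeasure p] [IsProbabilityMeasure q]
    (h₁ : 2 ≤ Fintype.card ι₁) (h₂ : 2 ≤ Fintype.card ι₂) :
    ∫ Z, mmdU κ Z.1 Z.2 ∂(Measure.pi fun _ : ι₁ => p).prod (Measure.pi fun _ : ι₂ => q)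
      = mmdSq κ p q := by
  have : Nonempty ι₁ := Fintype.card_pos_iff.1 (by omega)
  have : Nonempty ι₂ := Fintype.card_pos_iff.1 (by omega)
  have hint₁ : Integrable (fun Z : (ι₁ → 𝓧) × (ι₂ → 𝓧) => offDiagMean κ Z.1)
      ((Measure.pi fun _ : ι₁ => p).prod (Measure.pi fun _ : ι₂ => q)) :=
    Integrable.of_mem_Icc 0 K ((measurable_offDiagMean hκm).comp measurable_fst).aemeasurable
      (ae_of_all _ fun Z => offDiagMean_mem_Icc hκ h₁ _)
  have hint₂ : Integrable (fun Z : (ι₁ → 𝓧) × (ι₂ → 𝓧) => offDiagMean κ Z.2)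
      ((Measure.pi fun _ : ι₁ => p).prod (Measure.pi fun _ : ι₂ => q)) :=
    Integrable.of_mem_Icc 0 K ((measurable_offDiagMean hκm).comp measurable_snd).aemeasurable
      (ae_of_all _ fun Z => offDiagMean_mem_Icc hκ h₂ _)
  have hint₃ : Integrable (fun Z : (ι₁ → 𝓧) × (ι₂ → 𝓧) => crossMean κ Z.1 Z.2)
      ((Measure.pi fun _ : ι₁ => p).prod (Measure.pi fun _ : ι₂ => q)) :=
    Integrable.of_mem_Icc 0 K (measurable_crossMean hκm).aemeasurable
      (ae_of_all _ fun Z => crossMean_mem_Icc hκ _ _)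
  simp_rw [mmdU_eq]
  rw [integral_sub (hint₁.fun_add hint₂) (hint₃.const_mul 2), integral_add hint₁ hint₂,
    integral_const_mul, integral_fun_fst, integral_fun_snd, integral_offDiagMean hκm hκ p h₁,
    integral_offDiagMean hκm hκ q h₂, integral_crossMean hκm hκ p q, mmdSq]
  simp only [probReal_univ, one_smul]
  ring

theorem hasSubgaussianMGF_mmdU (hκm : Measurable (Function.uncurry κ))
    (hκ : ∀ x y, κ x y ∈ Set.Icc 0 K) (p q : Measure 𝓧) [IsProbabilityMeasure p]
    [IsProbabilityMeasure q] (h₁ : 2 ≤ Fintype.card ι₁) (h₂ : 2 ≤ Fintype.card ι₂) :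
    HasSubgaussianMGF (fun Z => mmdU κ Z.1 Z.2
        - ∫ Z', mmdU κ Z'.1 Z'.2 ∂(Measure.pi fun _ : ι₁ => p).prod (Measure.pi fun _ : ι₂ => q))
      (4 * K ^ 2 / Fintype.card ι₁ + 4 * K ^ 2 / Fintype.card ι₂).toNNReal
      ((Measure.pi fun _ : ι₁ => p).prod (Measure.pi fun _ : ι₂ => q)) := by
  obtain ⟨x⟩ := nonempty_of_isProbabilityMeasure p
  have hK : 0 ≤ K := (hκ x x).1.trans (hκ x x).2
  have : Nonempty ι₁ := Fintype.card_pos_iff.1 (by omega)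
  have : Nonempty ι₂ := Fintype.card_pos_iff.1 (by omega)
  let μ : ι₁ ⊕ ι₂ → Measure 𝓧 := Sum.elim (fun _ => p) (fun _ => q)
  have : ∀ i, IsProbabilityMeasure (μ i) :=
    Sum.rec (fun _ => inferInstanceAs (IsProbabilityMeasure p))
      (fun _ => inferInstanceAs (IsProbabilityMeasure q))
  let S := MeasurableEquiv.sumPiEquivProdPi fun _ : ι₁ ⊕ ι₂ => 𝓧
  let c : ι₁ ⊕ ι₂ → ℝ≥0 := Sum.elim (fun _ => (4 * K / Fintype.card ι₁).toNNReal)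
    (fun _ => (4 * K / Fintype.card ι₂).toNNReal)
  have hc : HasBoundedDifferences (fun z => mmdU κ (S z).1 (S z).2) c := by
    rintro (i | i) z z' hzz'
    · have hY : (fun j => z (.inr j)) = fun j => z' (.inr j) := funext fun j => hzz' _ (by simp)
      change mmdU κ (fun j => z (.inl j)) (fun j => z (.inr j))
        - mmdU κ (fun j => z' (.inl j)) (fun j => z' (.inr j)) ≤ (4 * K / Fintype.card ι₁).toNNReal
      rw [← hY]
      exact (mmdU_sub_mmdU_le_left hκ h₁ _ i fun j hj => hzz' (.inl j) (by simpa using hj)).trans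
        (Real.le_coe_toNNReal _)
    · have hX : (fun j => z (.inl j)) = fun j => z' (.inl j) := funext fun j => hzz' _ (by simp)
      change mmdU κ (fun j => z (.inl j)) (fun j => z (.inr j))
        - mmdU κ (fun j => z' (.inl j)) (fun j => z' (.inr j)) ≤ (4 * K / Fintype.card ι₂).toNNReal
      rw [← hX]
      exact (mmdU_sub_mmdU_le_right hκ h₂ _ i fun j hj => hzz' (.inr j) (by simpa using hj)).trans
        (Real.le_coe_toNNReal _)
  have hsum : ∑ i, (c i / 2) ^ 2
      = (4 * K ^ 2 / Fintype.card ι₁ + 4 * K ^ 2 / Fintype.card ι₂).toNNReal := by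
    rw [Fintype.sum_sum_type]
    ext
    simp only [c, Sum.elim_inl, Sum.elim_inr, sum_const, card_univ, nsmul_eq_mul]
    push_cast
    rw [Real.coe_toNNReal _ (by positivity), Real.coe_toNNReal _ (by positivity),
      Real.coe_toNNReal _ (by positivity)]
    field_simp
    ring
  have h := (hasSubgaussianMGF_pi_of_hasBoundedDifferences μ
    ((measurable_mmdU hκm).comp S.measurable) (fun z => mmdU_mem_Icc hκ h₁ h₂ _ _)
    hc).sub_integral_comp_measurePreserving ((measurePreserving_sumPiEquivProdPi μ).symm S)
    S.symm.measurableEmbedding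
  rw [hsum] at h
  simp only [Function.comp_apply, MeasurableEquiv.apply_symm_apply] at h
  exact h

theorem measure_mmdU_le_mmdSq_sub_le (hκm : Measurable (Function.uncurry κ))
    (hκ : ∀ x y, κ x y ∈ Set.Icc 0 K) (p q : Measure 𝓧) [IsProbabilityMeasure p]
    [IsProbabilityMeasure q] (h₁ : 2 ≤ Fintype.card ι₁) (h₂ : 2 ≤ Fintype.card ι₂) {ε : ℝ}
    (hε : 0 ≤ ε) :
    (Measure.pi fun _ : ι₁ => p).prod (Measure.pi fun _ : ι₂ => q)
        {Z | mmdU κ Z.1 Z.2 ≤ mmdSq κ p q - ε}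
      ≤ ENNReal.ofReal (exp (-ε ^ 2
          / (8 * K ^ 2 * (1 / Fintype.card ι₁ + 1 / Fintype.card ι₂)))) := by
  have h := (hasSubgaussianMGF_mmdU hκm hκ p q h₁ h₂).measure_le_integral_sub_le hε
  rw [integral_mmdU hκm hκ p q h₁ h₂, Real.coe_toNNReal _ (by positivity)] at h
  convert h using 4
  ring

end MMD

theorem anomalous_lower_tail_general
    {𝓧 : Type*} [MeasurableSpace 𝓧]
    (κ : 𝓧 → 𝓧 → ℝ) (K : ℝ)
    (hκ : Measurable (Function.uncurry κ)) (hb : ∀ x y, 0 ≤ κ x y ∧ κ x y ≤ K)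
    (p q : Measure 𝓧) [IsProbabilityMeasure p] [IsProbabilityMeasure q]
    {m : ℕ} (hm : 2 ≤ m)
    {Ω : Type*} [MeasurableSpace Ω] (P : Measure Ω)
    (X : Ω → Fin m → 𝓧) (Y : Ω → Fin m → 𝓧)
    (hlaw : Measure.map (fun ω => (X ω, Y ω)) P
      = (Measure.pi fun _ : Fin m => p).prod (Measure.pi fun _ : Fin m => q))
    (δ : ℝ) (hδ : δ < mmdSq κ p q) :
    P {ω | mmdU κ (X ω) (Y ω) ≤ δ}
      ≤ ENNReal.ofReal
          (Real.exp (-(m : ℝ) * (mmdSq κ p q - δ) ^ 2 / (16 * K ^ 2))) := by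
  have hXY : AEMeasurable (fun ω => (X ω, Y ω)) P :=
    .of_map_ne_zero (by rw [hlaw]; exact IsProbabilityMeasure.ne_zero _)
  have hcard : 2 ≤ Fintype.card (Fin m) := by simpa using hm
  have hset : MeasurableSet {Z : (Fin m → 𝓧) × (Fin m → 𝓧) | mmdU κ Z.1 Z.2 ≤ δ} :=
    measurableSet_le (measurable_mmdU hκ) measurable_const
  calc P {ω | mmdU κ (X ω) (Y ω) ≤ δ}
      = (Measure.pi fun _ : Fin m => p).prod (Measure.pi fun _ : Fin m => q)
          {Z | mmdU κ Z.1 Z.2 ≤ mmdSq κ p q - (mmdSq κ p q - δ)} := by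
        rw [sub_sub_cancel, ← hlaw, Measure.map_apply_of_aemeasurable hXY hset]
        rfl
    _ ≤ ENNReal.ofReal (exp (-(mmdSq κ p q - δ) ^ 2 / (8 * K ^ 2 * (1 / m + 1 / m)))) := by
        simpa using measure_mmdU_le_mmdSq_sub_le hκ hb p q hcard hcard (sub_nonneg.2 hδ.le)
    _ = _ := by
        rw [show 8 * K ^ 2 * (1 / (m : ℝ) + 1 / m) = 16 * K ^ 2 / m by ring, div_div_eq_mul_div]
        ring_nf

/-- One-sided concentration for an anomalous sequence (lower tail). -/
theorem anomalous_lower_tail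
    {𝓧 : Type*} [MeasurableSpace 𝓧]
    (κ : 𝓧 → 𝓧 → ℝ) (K : ℝ)
    (hκ : Measurable (Function.uncurry κ)) (hb : ∀ x y, 0 ≤ κ x y ∧ κ x y ≤ K)
    (p q : Measure 𝓧) [IsProbabilityMeasure p] [IsProbabilityMeasure q]
    {m : ℕ} (hm : 2 ≤ m)
    {Ω : Type*} [MeasurableSpace Ω] (P : Measure Ω) [IsProbabilityMeasure P]
    (X : Ω → Fin m → 𝓧) (Y : Ω → Fin m → 𝓧)
    (hX : Measurable X) (hY : Measurable Y)
    (hlaw : Measure.map (fun ω => (X ω, Y ω)) P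
      = (Measure.pi fun _ : Fin m => p).prod (Measure.pi fun _ : Fin m => q))
    (δ : ℝ) (hδ0 : 0 < δ) (hδ : δ < mmdSq κ p q) :
    P {ω | mmdU κ (X ω) (Y ω) ≤ δ}
      ≤ ENNReal.ofReal
          (Real.exp (-(m : ℝ) * (mmdSq κ p q - δ) ^ 2 / (16 * K ^ 2))) :=
  anomalous_lower_tail_general κ K hκ hb p q hm P X Y hlaw δ hδ
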